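/- (Existence and uniqueness of the regularized fixed point.) Let δ > 0, let S be a K×K complex Hermitian positive semidefinite matrix, and let R_1, …, R_D be K×K complex Hermitian positive semidefinite matrices. Then there exists exactly one vector (e_1, …, e_D) ∈ [0,∞)^D satisfying e_d = (1/K)·Tr( R_d ( (1/K)·Σ_{s=1}^D R_s/(1+e_s) + S + δI )⁻¹ ) for all d = 1, …, D. -/

import Mathlib

/-!
Write `M(e) = (1/K) Σ_s R_s/(1+e_s) + S + δI` and `F_d(e) = (1/K) Tr(R_d M(e)⁻¹)`.
For `e ≥ 0` we have `M(e) ≥ δI` and `M` is antitone in `e`; since inversion is operator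
antitone, `F` is monotone and maps `[0,∞)^D` into the box `0 ≤ e_d ≤ (1/K) Tr(R_d)/δ`, so
Knaster–Tarski on this box gives a fixed point.

For uniqueness, `M(α(1+e) - 1) = α⁻¹ M(e) + (1 - α⁻¹)(S + δI) ≥ α⁻¹ M(e)` gives
`F(α(1+e) - 1) ≤ α F(e)` for `α ≥ 1`. If `e, e'` are fixed points with `e' ≰ e`, let
`α = max_d (1+e'_d)/(1+e_d) > 1`, attained at `m`. Then `e' ≤ α(1+e) - 1`, and monotonicity gives
`e'_m = F_m(e') ≤ α e_m < α(1+e_m) - 1 = e'_m`.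
-/

open Matrix Function
open scoped ComplexOrder MatrixOrder Matrix.Norms.L2Operator

namespace Matrix

variable {𝕜 n : Type*} [RCLike 𝕜] [Fintype n]

lemma PosSemidef.trace_mul_nonneg {A B : Matrix n n 𝕜} (hA : A.PosSemidef) (hB : B.PosSemidef) :
    0 ≤ (A * B).trace := by
  classical
  obtain ⟨C, rfl⟩ := CStarAlgebra.nonneg_iff_eq_star_mul_self.mp hA.nonneg
  rw [star_eq_conjTranspose, Matrix.mul_assoc, trace_mul_comm]
  simpa [Matrix.mul_assoc] using (hB.mul_mul_conjTranspose_same C).trace_nonneg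

lemma PosSemidef.trace_mul_le_trace_mul {A B C : Matrix n n 𝕜} (hA : A.PosSemidef)
    (hBC : B ≤ C) : (A * B).trace ≤ (A * C).trace := by
  simpa [Matrix.mul_sub, trace_sub] using hA.trace_mul_nonneg (le_iff.mp hBC)

variable [DecidableEq n]

lemma PosDef.inv_le_inv_of_le {A B : Matrix n n ℂ} (hA : A.PosDef) (hAB : A ≤ B) :
    B⁻¹ ≤ A⁻¹ := by
  have hB : B.PosDef := by simpa using hA.add_posSemidef (le_iff.mp hAB)
  simpa using CStarAlgebra.inv_le_inv (a := hA.isUnit.unit) (b := hB.isUnit.unit)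
    hA.posSemidef.nonneg hAB

end Matrix

theorem exists_isFixedPt_of_monotoneOn_of_mapsTo_Icc {α : Type*} [ConditionallyCompleteLattice α]
    {f : α → α} {a b : α} (hab : a ≤ b) (hf : MonotoneOn f (Set.Icc a b))
    (hmaps : Set.MapsTo f (Set.Icc a b) (Set.Icc a b)) :
    ∃ x ∈ Set.Icc a b, IsFixedPt f x := by
  have : Fact (a ≤ b) := ⟨hab⟩
  let g : Set.Icc a b →o Set.Icc a b := ⟨hmaps.restrict, fun x y hxy => hf x.2 y.2 hxy⟩
  exact ⟨g.lfp, g.lfp.2, congrArg Subtype.val g.map_lfp⟩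

theorem le_of_isFixedPt_of_monotoneOn_of_scaling {ι : Type*} [Fintype ι]
    {F : (ι → ℝ) → ι → ℝ} (hF : MonotoneOn F (Set.Ici 0))
    (hscale : ∀ e, 0 ≤ e → ∀ α : ℝ, 1 < α → F (α • (1 + e) - 1) ≤ α • F e)
    {e e' : ι → ℝ} (he : 0 ≤ e) (he' : 0 ≤ e') (hfe : IsFixedPt F e) (hfe' : IsFixedPt F e') :
    e' ≤ e := by
  by_contra hne
  obtain ⟨i₀, hi₀⟩ : ∃ i, e i < e' i := by simpa [Pi.le_def] using hne
  have hpos (i : ι) : 0 < 1 + e i := by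
    have : 0 ≤ e i := he i
    linarith
  obtain ⟨m, -, hm⟩ := Finset.univ.exists_max_image (fun i => (1 + e' i) / (1 + e i))
    ⟨i₀, Finset.mem_univ _⟩
  set α := (1 + e' m) / (1 + e m)
  have hα : 1 < α :=
    ((one_lt_div (hpos i₀)).mpr (by linarith)).trans_le (hm i₀ (Finset.mem_univ _))
  have hle : e' ≤ α • (1 + e) - 1 := fun i => by
    have := (div_le_iff₀ (hpos i)).mp (hm i (Finset.mem_univ _))
    simp only [Pi.sub_apply, Pi.smul_apply, Pi.add_apply, Pi.one_apply, smul_eq_mul]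
    linarith
  have hm_le : e' m ≤ α * e m := calc
    e' m = F e' m := (congrFun hfe' m).symm
    _ ≤ F (α • (1 + e) - 1) m := hF he' (he'.trans hle) hle m
    _ ≤ α * F e m := hscale e he α hα m
    _ = α * e m := by rw [hfe]
  have hm_eq : 1 + e' m = α * (1 + e m) := (div_mul_cancel₀ _ (hpos m).ne').symm
  linarith

theorem eq_of_isFixedPt_of_monotoneOn_of_scaling {ι : Type*} [Fintype ι]
    {F : (ι → ℝ) → ι → ℝ} (hF : MonotoneOn F (Set.Ici 0))
    (hscale : ∀ e, 0 ≤ e → ∀ α : ℝ, 1 < α → F (α • (1 + e) - 1) ≤ α • F e)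
    {e e' : ι → ℝ} (he : 0 ≤ e) (he' : 0 ≤ e') (hfe : IsFixedPt F e) (hfe' : IsFixedPt F e') :
    e = e' :=
  le_antisymm (le_of_isFixedPt_of_monotoneOn_of_scaling hF hscale he' he hfe' hfe)
    (le_of_isFixedPt_of_monotoneOn_of_scaling hF hscale he he' hfe hfe')

section RegularizedFixedPoint

variable {K : ℕ} {ι : Type*} [Fintype ι]
  (δ : ℝ) (S : Matrix (Fin K) (Fin K) ℂ) (R : ι → Matrix (Fin K) (Fin K) ℂ)

noncomputable def regMatrix (e : ι → ℝ) : Matrix (Fin K) (Fin K) ℂ :=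
  (1 / (K : ℂ)) • ∑ s, (1 / (1 + (e s : ℂ))) • R s + S + (δ : ℂ) • 1

noncomputable def regMap (e : ι → ℝ) (d : ι) : ℝ :=
  ((1 / (K : ℂ)) * (R d * (regMatrix δ S R e)⁻¹).trace).re

variable {δ S R}

lemma regMatrix_antitoneOn (hR : ∀ s, (R s).PosSemidef) :
    AntitoneOn (regMatrix δ S R) (Set.Ici 0) := by
  intro e he e' _ hee'
  unfold regMatrix
  gcongr with s
  · exact (hR s).nonneg
  · have : (0 : ℝ) ≤ e s := he s
    positivity
  · exact_mod_cast hee' s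

lemma smul_one_le_regMatrix (hS : S.PosSemidef) (hR : ∀ s, (R s).PosSemidef)
    {e : ι → ℝ} (he : 0 ≤ e) : (δ : ℂ) • 1 ≤ regMatrix δ S R e := by
  refine le_iff.mpr ?_
  rw [regMatrix, add_sub_cancel_right]
  refine .add (.smul (posSemidef_sum _ fun s _ => (hR s).smul ?_) (by positivity)) hS
  have : (0 : ℝ) ≤ e s := he s
  positivity

lemma regMatrix_posDef (hδ : 0 < δ) (hS : S.PosSemidef) (hR : ∀ s, (R s).PosSemidef)
    {e : ι → ℝ} (he : 0 ≤ e) : (regMatrix δ S R e).PosDef := by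
  simpa using (PosDef.one.smul (Complex.zero_lt_real.mpr hδ)).add_posSemidef
    (le_iff.mp (smul_one_le_regMatrix (δ := δ) hS hR he))

lemma regMatrix_smul_one_add_sub_one (e : ι → ℝ) (α : ℝ) :
    regMatrix δ S R (α • (1 + e) - 1)
      = (α : ℂ)⁻¹ • regMatrix δ S R e + (1 - (α : ℂ)⁻¹) • (S + (δ : ℂ) • 1) := by
  have hcoeff (s : ι) : 1 / (1 + (((α • (1 + e) - 1) s : ℝ) : ℂ))
      = (α : ℂ)⁻¹ * (1 / (1 + (e s : ℂ))) := by
    simp only [Pi.sub_apply, Pi.smul_apply, Pi.add_apply, Pi.one_apply, smul_eq_mul]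
    push_cast
    rw [add_sub_cancel, one_div, one_div, mul_inv]
  simp only [regMatrix, hcoeff, ← smul_smul, ← Finset.smul_sum]
  module

lemma inv_regMatrix_smul_one_add_sub_one_le (hδ : 0 < δ) (hS : S.PosSemidef)
    (hR : ∀ s, (R s).PosSemidef) {e : ι → ℝ} (he : 0 ≤ e) {α : ℝ} (hα : 1 ≤ α) :
    (regMatrix δ S R (α • (1 + e) - 1))⁻¹ ≤ (α : ℂ) • (regMatrix δ S R e)⁻¹ := by
  have hα₀ : (0 : ℂ) < α := by exact_mod_cast zero_lt_one.trans_le hα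
  have hM := regMatrix_posDef hδ hS hR he
  have hle : (α : ℂ)⁻¹ • regMatrix δ S R e ≤ regMatrix δ S R (α • (1 + e) - 1) := by
    have hc : (0 : ℂ) ≤ 1 - (α : ℂ)⁻¹ := by
      exact_mod_cast sub_nonneg.mpr (inv_le_one_of_one_le₀ hα)
    rw [regMatrix_smul_one_add_sub_one]
    exact le_add_of_nonneg_right
      ((hS.add (PosSemidef.one.smul (Complex.zero_le_real.mpr hδ.le))).smul hc).nonneg
  calc (regMatrix δ S R (α • (1 + e) - 1))⁻¹
      ≤ ((α : ℂ)⁻¹ • regMatrix δ S R e)⁻¹ := (hM.smul (inv_pos.mpr hα₀)).inv_le_inv_of_le hle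
    _ = (α : ℂ) • (regMatrix δ S R e)⁻¹ := inv_eq_left_inv <| by
      rw [smul_mul_smul_comm, mul_inv_cancel₀ hα₀.ne', one_smul,
        nonsing_inv_mul _ ((isUnit_iff_isUnit_det _).mp hM.isUnit)]

lemma regMap_le_of_inv_le (hR : ∀ s, (R s).PosSemidef) {e : ι → ℝ}
    {X : Matrix (Fin K) (Fin K) ℂ} (h : (regMatrix δ S R e)⁻¹ ≤ X) (d : ι) :
    regMap δ S R e d ≤ ((1 / (K : ℂ)) * (R d * X).trace).re :=
  Complex.re_le_re (mul_le_mul_of_nonneg_left ((hR d).trace_mul_le_trace_mul h) (by positivity))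

lemma regMap_monotoneOn (hδ : 0 < δ) (hS : S.PosSemidef) (hR : ∀ s, (R s).PosSemidef) :
    MonotoneOn (regMap δ S R) (Set.Ici 0) := fun _ he _ he' hee' =>
  regMap_le_of_inv_le hR <|
    (regMatrix_posDef hδ hS hR he').inv_le_inv_of_le (regMatrix_antitoneOn hR he he' hee')

lemma regMap_smul_one_add_sub_one_le (hδ : 0 < δ) (hS : S.PosSemidef)
    (hR : ∀ s, (R s).PosSemidef) {e : ι → ℝ} (he : 0 ≤ e) {α : ℝ} (hα : 1 ≤ α) :
    regMap δ S R (α • (1 + e) - 1) ≤ α • regMap δ S R e := fun d => by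
  refine (regMap_le_of_inv_le hR
    (inv_regMatrix_smul_one_add_sub_one_le hδ hS hR he hα) d).trans_eq ?_
  rw [mul_smul_comm, trace_smul, smul_eq_mul, mul_left_comm, Complex.re_ofReal_mul]
  rfl

lemma zero_le_mul_trace_mul_inv_regMatrix (hδ : 0 < δ) (hS : S.PosSemidef)
    (hR : ∀ s, (R s).PosSemidef) {e : ι → ℝ} (he : 0 ≤ e) (d : ι) :
    0 ≤ (1 / (K : ℂ)) * (R d * (regMatrix δ S R e)⁻¹).trace :=
  mul_nonneg (by positivity)
    ((hR d).trace_mul_nonneg (regMatrix_posDef hδ hS hR he).inv.posSemidef)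

lemma ofReal_regMap (hδ : 0 < δ) (hS : S.PosSemidef) (hR : ∀ s, (R s).PosSemidef)
    {e : ι → ℝ} (he : 0 ≤ e) (d : ι) :
    (regMap δ S R e d : ℂ) = (1 / (K : ℂ)) * (R d * (regMatrix δ S R e)⁻¹).trace :=
  (Complex.eq_re_of_ofReal_le (r := 0)
    (by simpa using zero_le_mul_trace_mul_inv_regMatrix hδ hS hR he d)).symm

lemma regMap_nonneg (hδ : 0 < δ) (hS : S.PosSemidef) (hR : ∀ s, (R s).PosSemidef)
    {e : ι → ℝ} (he : 0 ≤ e) : 0 ≤ regMap δ S R e := fun d =>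
  Complex.re_le_re (zero_le_mul_trace_mul_inv_regMatrix hδ hS hR he d)

lemma regMap_le (hδ : 0 < δ) (hS : S.PosSemidef) (hR : ∀ s, (R s).PosSemidef)
    {e : ι → ℝ} (he : 0 ≤ e) :
    regMap δ S R e ≤ fun d => ((1 / (K : ℂ)) * (R d * ((δ : ℂ) • 1)⁻¹).trace).re := fun d =>
  regMap_le_of_inv_le hR ((PosDef.one.smul (Complex.zero_lt_real.mpr hδ)).inv_le_inv_of_le
    (smul_one_le_regMatrix hS hR he)) d

lemma exists_isFixedPt_regMap (hδ : 0 < δ) (hS : S.PosSemidef) (hR : ∀ s, (R s).PosSemidef) :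
    ∃ e, 0 ≤ e ∧ IsFixedPt (regMap δ S R) e := by
  obtain ⟨e, he, hfix⟩ := exists_isFixedPt_of_monotoneOn_of_mapsTo_Icc
    ((regMap_nonneg hδ hS hR le_rfl).trans (regMap_le hδ hS hR le_rfl))
    ((regMap_monotoneOn hδ hS hR).mono Set.Icc_subset_Ici_self)
    fun e he => ⟨regMap_nonneg hδ hS hR he.1, regMap_le hδ hS hR he.1⟩
  exact ⟨e, he.1, hfix⟩

lemma eq_of_isFixedPt_regMap (hδ : 0 < δ) (hS : S.PosSemidef) (hR : ∀ s, (R s).PosSemidef)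
    {e e' : ι → ℝ} (he : 0 ≤ e) (he' : 0 ≤ e') (hfe : IsFixedPt (regMap δ S R) e)
    (hfe' : IsFixedPt (regMap δ S R) e') : e = e' :=
  eq_of_isFixedPt_of_monotoneOn_of_scaling (regMap_monotoneOn hδ hS hR)
    (fun _ hv _ hα => regMap_smul_one_add_sub_one_le hδ hS hR hv hα.le) he he' hfe hfe'

end RegularizedFixedPoint

/-- **Existence and uniqueness of the regularized fixed point.**
Let `δ > 0`, `S` a `K × K` Hermitian positive semidefinite matrix, and
`R_1, …, R_D` `K × K` Hermitian positive semidefinite matrices.  Then there is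
exactly one vector `(e_1, …, e_D) ∈ [0,∞)^D` with
`e_d = (1/K)·Tr(R_d ((1/K)·Σ_s R_s/(1+e_s) + S + δI)⁻¹)` for all `d`. -/
theorem fixed_point_exists_unique {K D : ℕ} (δ : ℝ) (hδ : 0 < δ)
    (S : Matrix (Fin K) (Fin K) ℂ) (hS : S.PosSemidef)
    (R : Fin D → Matrix (Fin K) (Fin K) ℂ) (hR : ∀ d, (R d).PosSemidef) :
    ∃! e : Fin D → ℝ, (∀ d, 0 ≤ e d) ∧ ∀ d,
      ((e d : ℝ) : ℂ) = (1 / (K : ℂ)) * Matrix.trace (R d *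
        ((1 / (K : ℂ)) • ∑ s, (1 / (1 + (e s : ℂ))) • R s + S + (δ : ℂ) • 1)⁻¹) := by
  obtain ⟨e, he, hfix⟩ := exists_isFixedPt_regMap hδ hS hR
  refine ⟨e, ⟨he, fun d => ?_⟩, fun e' ⟨he', hfix'⟩ => ?_⟩
  · rw [← congrFun hfix d]
    exact ofReal_regMap hδ hS hR he d
  · exact eq_of_isFixedPt_regMap hδ hS hR he' he
      (funext fun d => (congrArg Complex.re (hfix' d)).symm) hfix
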